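/- If s₁ and s₂ are vectors with ‖s₁‖₀ ≤ k and ‖s₂‖₀ ≤ k where 2k < spark(M), and M s₁ = M s₂, then s₁ = s₂. -/
import Mathlib


open Matrix

/-- The spark of a matrix: the smallest cardinality of a linearly dependent set of
columns (`⊤` if every set of columns is linearly independent). -/
noncomputable def spark {m r : ℕ} (M : Matrix (Fin m) (Fin r) ℝ) : ℕ∞ :=
  sInf {c : ℕ∞ | ∃ s : Finset (Fin r), (s.card : ℕ∞) = c ∧
    ¬ LinearIndependent ℝ (fun i : {x // x ∈ s} => Mᵀ (i : Fin r))}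

/-- Uniqueness of `k`-sparse representations when `2k < spark M`. -/
theorem sparse_representation_unique {m r : ℕ} (M : Matrix (Fin m) (Fin r) ℝ)
    (k : ℕ) (hk : (2 * k : ℕ∞) < spark M) (s₁ s₂ : Fin r → ℝ)
    (h₁ : (Finset.univ.filter fun i => s₁ i ≠ 0).card ≤ k)
    (h₂ : (Finset.univ.filter fun i => s₂ i ≠ 0).card ≤ k)
    (heq : M.mulVec s₁ = M.mulVec s₂) :
    s₁ = s₂ := by
  by_contra hne
  set d : Fin r → ℝ := s₁ - s₂ with hd
  have hdne : d ≠ 0 := sub_ne_zero.mpr hne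
  set s : Finset (Fin r) := Finset.univ.filter fun i => d i ≠ 0 with hs
  -- card bound
  have hsub : s ⊆ (Finset.univ.filter fun i => s₁ i ≠ 0) ∪
      (Finset.univ.filter fun i => s₂ i ≠ 0) := by
    intro i hi
    simp only [hs, Finset.mem_filter, Finset.mem_union, Finset.mem_univ, true_and] at hi ⊢
    by_contra hc
    push_neg at hc
    exact hi (by simp [hd, hc.1, hc.2])
  have hcard : s.card ≤ 2 * k := by
    calc s.card ≤ _ := Finset.card_le_card hsub
    _ ≤ (Finset.univ.filter fun i => s₁ i ≠ 0).card +
        (Finset.univ.filter fun i => s₂ i ≠ 0).card := Finset.card_union_le _ _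
    _ ≤ 2 * k := by omega
  -- M d = 0
  have hMd : M.mulVec d = 0 := by
    have := sub_eq_zero.mpr heq
    rw [← this]
    ext j
    simp [hd, mulVec, dotProduct, Matrix.sub_apply, mul_sub, Finset.sum_sub_distrib]
  -- dependence
  have hdep : ¬ LinearIndependent ℝ (fun i : {x // x ∈ s} => Mᵀ (i : Fin r)) := by
    intro hli
    obtain ⟨i, hi⟩ : ∃ i, d i ≠ 0 := Function.ne_iff.mp hdne
    have his : i ∈ s := by simp [hs, hi]
    have hsum : ∑ i : {x // x ∈ s}, d (i : Fin r) • Mᵀ (i : Fin r) = 0 := by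
      rw [Finset.sum_coe_sort s (fun i => d i • Mᵀ i)]
      have : ∑ i ∈ s, d i • Mᵀ i = ∑ i : Fin r, d i • Mᵀ i := by
        apply Finset.sum_subset (Finset.subset_univ s)
        intro x _ hx
        simp only [hs, Finset.mem_filter, Finset.mem_univ, true_and, not_not] at hx
        simp [hx]
      rw [this]
      ext j
      have := congrFun hMd j
      simpa [mulVec, dotProduct, mul_comm] using this
    have := Fintype.linearIndependent_iff.mp hli (fun i => d (i : Fin r)) hsum ⟨i, his⟩
    exact hi this
  have hle : spark M ≤ (s.card : ℕ∞) := sInf_le ⟨s, rfl, hdep⟩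
  have : (s.card : ℕ∞) ≤ (2 * k : ℕ∞) := by exact_mod_cast hcard
  exact absurd (hle.trans this) (not_le.mpr hk)
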